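/- Define out : ℤ → ℝ by out(x) = 0 for x ≤ 0, out(1) = 1, out(2) = 2, and for α ≥ 3, out(α) = 1 + (1/α)·∑_{i=1}^{α} max(out(i−1) + out(α−i−1), out(α−i) + out(i−2)). Then out is non-decreasing and out(α) ≤ α for all α ≥ 0. -/

import Mathlib

/-!
The recurrence already holds at `α = 1` and `α = 2`, so both claims follow by induction on `α ≥ 1`
from the recurrence alone. For monotonicity, going from `α` to `α + 1` decreases no summand
(the arguments `α - i` and `α - i - 1` grow) and adds the summand `i = α + 1`, which equals
`out α`; the average then does not drop. For the bound, `out j ≤ max j 0` below `α` makes every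
summand at most `α - 1`, so `out α ≤ 1 + (α - 1) = α`.
-/

open Finset

def splitTerm (f : ℤ → ℝ) (α i : ℤ) : ℝ :=
  max (f (i - 1) + f (α - i - 1)) (f (α - i) + f (i - 2))

section Recurrence

variable {f : ℤ → ℝ}

lemma splitTerm_le_splitTerm_succ {α i : ℤ} (hstep : ∀ j < α, f j ≤ f (j + 1))
    (hi : i ∈ Icc 1 α) : splitTerm f α i ≤ splitTerm f (α + 1) i := by
  rw [mem_Icc] at hi
  have h₁ := hstep (α - i - 1) (by omega)
  have h₂ := hstep (α - i) (by omega)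
  rw [splitTerm, splitTerm, show α + 1 - i - 1 = α - i - 1 + 1 by ring,
    show α + 1 - i = α - i + 1 by ring]
  exact max_le_max (by linarith) (by linarith)

lemma splitTerm_succ_self {α : ℤ} (hneg : ∀ x ≤ 0, f x = 0) (hα : f (α - 1) ≤ f α) :
    splitTerm f (α + 1) (α + 1) = f α := by
  rw [splitTerm, show α + 1 - (α + 1) - 1 = -1 by ring, show α + 1 - (α + 1) = 0 by ring,
    show α + 1 - 1 = α by ring, show α + 1 - 2 = α - 1 by ring,
    hneg (-1) (by norm_num), hneg 0 le_rfl, add_zero, zero_add]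
  exact max_eq_left hα

lemma sum_splitTerm_add_le_sum_splitTerm_succ {α : ℤ} (hneg : ∀ x ≤ 0, f x = 0) (hα : 1 ≤ α)
    (hstep : ∀ j < α, f j ≤ f (j + 1)) :
    ∑ i ∈ Icc 1 α, splitTerm f α i + f α ≤ ∑ i ∈ Icc 1 (α + 1), splitTerm f (α + 1) i := by
  have htop : splitTerm f (α + 1) (α + 1) = f α :=
    splitTerm_succ_self hneg (by simpa using hstep (α - 1) (by omega))
  rw [← insert_Icc_right_eq_Icc_add_one (by omega), sum_insert (by simp), htop, add_comm]
  exact add_le_add_right (sum_le_sum fun i hi => splitTerm_le_splitTerm_succ hstep hi) _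

lemma le_of_one_add_average {α x y S T : ℝ} (hα : 0 < α) (hx : x = 1 + 1 / α * S)
    (hy : y = 1 + 1 / (α + 1) * T) (hST : S + x ≤ T) : x ≤ y := by
  have hS : S = α * (x - 1) := by rw [hx]; field_simp; ring
  have hT : T = (α + 1) * (y - 1) := by rw [hy]; field_simp; ring
  nlinarith

lemma splitTerm_le_sub_one {α i : ℤ} (hbound : ∀ j < α, f j ≤ max (j : ℝ) 0)
    (hi : i ∈ Icc 1 α) : splitTerm f α i ≤ α - 1 := by
  rw [mem_Icc] at hi
  have hi₁ : (1 : ℝ) ≤ i := by exact_mod_cast hi.1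
  have hi₂ : (i : ℝ) ≤ α := by exact_mod_cast hi.2
  have b₁ := hbound (i - 1) (by omega)
  have b₂ := hbound (α - i - 1) (by omega)
  have b₃ := hbound (α - i) (by omega)
  have b₄ := hbound (i - 2) (by omega)
  push_cast at b₁ b₂ b₃ b₄
  rw [max_eq_left (by linarith : (0 : ℝ) ≤ i - 1)] at b₁
  rw [max_eq_left (by linarith : (0 : ℝ) ≤ α - i)] at b₃
  refine max_le ?_ ?_
  · have : max ((α : ℝ) - i - 1) 0 ≤ α - i := max_le (by linarith) (by linarith)
    linarith
  · have : max ((i : ℝ) - 2) 0 ≤ i - 1 := max_le (by linarith) (by linarith)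
    linarith

lemma sum_splitTerm_le {α : ℤ} (hα : 0 ≤ α) (hbound : ∀ j < α, f j ≤ max (j : ℝ) 0) :
    ∑ i ∈ Icc 1 α, splitTerm f α i ≤ α * (α - 1) :=
  calc ∑ i ∈ Icc 1 α, splitTerm f α i
      ≤ ∑ _i ∈ Icc 1 α, ((α : ℝ) - 1) := sum_le_sum fun i hi => splitTerm_le_sub_one hbound hi
    _ = α * (α - 1) := by
      rw [sum_const, Int.card_Icc, nsmul_eq_mul, add_sub_cancel_right, ← Int.cast_natCast,
        Int.toNat_of_nonneg hα]

variable (hneg : ∀ x ≤ 0, f x = 0)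
  (hrec : ∀ α : ℤ, 1 ≤ α → f α = 1 + 1 / (α : ℝ) * ∑ i ∈ Icc 1 α, splitTerm f α i)
include hneg hrec

lemma monotone_of_recurrence : Monotone f := by
  have hsteps : ∀ n : ℤ, 1 ≤ n → ∀ j < n, f j ≤ f (j + 1) := by
    intro n hn
    induction n, hn using Int.leInduction with
    | base =>
      intro j hj
      obtain hj | rfl : j < 0 ∨ j = 0 := by omega
      · rw [hneg j hj.le, hneg (j + 1) (by omega)]
      · rw [hneg 0 le_rfl, zero_add, hrec 1 le_rfl]
        norm_num [splitTerm, hneg]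
    | succ n hn ih =>
      intro j hj
      obtain hj | rfl : j < n ∨ j = n := by omega
      · exact ih j hj
      · refine le_of_one_add_average (by exact_mod_cast hn.trans_lt' one_pos) (hrec j hn)
          (by exact_mod_cast hrec (j + 1) (by omega))
          (sum_splitTerm_add_le_sum_splitTerm_succ hneg hn ih)
  refine monotone_int_of_le_succ fun j => ?_
  obtain hj | hj : j < 0 ∨ 0 ≤ j := lt_or_ge j 0
  · rw [hneg j hj.le, hneg (j + 1) (by omega)]
  · exact hsteps (j + 1) (by omega) j (by omega)

lemma le_self_of_recurrence {α : ℤ} (hα : 0 ≤ α) : f α ≤ α := by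
  have hbound : ∀ n : ℤ, 0 ≤ n → ∀ j ≤ n, f j ≤ max (j : ℝ) 0 := by
    intro n hn
    induction n, hn using Int.leInduction with
    | base => exact fun j hj => (hneg j hj).le.trans (le_max_right _ _)
    | succ n hn ih =>
      intro j hj
      obtain hj | rfl : j ≤ n ∨ j = n + 1 := by omega
      · exact ih j hj
      · have hpos : (0 : ℝ) < ((n + 1 : ℤ) : ℝ) := by exact_mod_cast (by omega : 0 < n + 1)
        rw [hrec (n + 1) (by omega)]
        refine le_max_of_le_left ?_
        calc 1 + 1 / ((n + 1 : ℤ) : ℝ) * ∑ i ∈ Icc 1 (n + 1), splitTerm f (n + 1) i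
            ≤ 1 + 1 / ((n + 1 : ℤ) : ℝ) * ((n + 1 : ℤ) * ((n + 1 : ℤ) - 1)) := by
              gcongr
              exact sum_splitTerm_le (by omega) fun j hj => ih j (by omega)
          _ = ((n + 1 : ℤ) : ℝ) := by field_simp; ring
  simpa [hα] using hbound α hα α le_rfl

end Recurrence

theorem stmt_11 (out : ℤ → ℝ)
    (h0 : ∀ x ≤ 0, out x = 0) (h1 : out 1 = 1) (h2 : out 2 = 2)
    (hrec : ∀ α : ℤ, 3 ≤ α → out α = 1 + (1 / (α : ℝ)) *
      ∑ i ∈ Finset.Icc (1 : ℤ) α,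
        max (out (i - 1) + out (α - i - 1)) (out (α - i) + out (i - 2))) :
    Monotone out ∧ ∀ α : ℤ, 0 ≤ α → out α ≤ (α : ℝ) := by
  have hrec' : ∀ α : ℤ, 1 ≤ α → out α = 1 + 1 / (α : ℝ) * ∑ i ∈ Icc 1 α, splitTerm out α i := by
    intro α hα
    obtain rfl | rfl | hα : α = 1 ∨ α = 2 ∨ 3 ≤ α := by omega
    · norm_num [splitTerm, h0, h1]
    · rw [show Icc (1 : ℤ) 2 = {1, 2} by decide, sum_pair (by decide)]
      norm_num [splitTerm, h0, h1, h2]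
    · exact hrec α hα
  exact ⟨monotone_of_recurrence h0 hrec', fun α hα => le_self_of_recurrence h0 hrec' hα⟩
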